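/- Let A be a finite subset of an abelian group with additive energy at least |A|³/C, i.e., the number of quadruples (x,y,x',y') ∈ A⁴ with x + y = x' + y' is at least |A|³/C. Then there exists a subset A' ⊆ A with |A'| ≥ c(C)|A| and |A' + A'| ≤ D(C)|A|, where c(C) > 0 and D(C) depend only on C. -/

import Mathlib

set_option maxHeartbeats 1000000
open scoped Pointwise Classical
open Finset
namespace BSGaux

lemma card_filter_prod_right {α β : Type*} (s : Finset α) (t : Finset β) (P : α × β → Prop)
    [DecidablePred P] [∀ b, DecidablePred fun a => P (a, b)] :
    #((s ×ˢ t).filter fun x => P x) = ∑ b ∈ t, #(s.filter fun a => P (a, b)) := by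
  simp only [Finset.card_filter, Finset.sum_product_right]

lemma card_filter_prod_left {α β : Type*} (s : Finset α) (t : Finset β) (P : α × β → Prop)
    [DecidablePred P] [∀ a, DecidablePred fun b => P (a, b)] :
    #((s ×ˢ t).filter fun x => P x) = ∑ a ∈ s, #(t.filter fun b => P (a, b)) := by
  simp only [Finset.card_filter, Finset.sum_product]

variable {G : Type*} [AddCommGroup G] [DecidableEq G]

noncomputable def wt (A : Finset G) (d : G) : ℕ := #((A ×ˢ A).filter fun z => z.1 - z.2 = d)

lemma energy_eq (A : Finset G) :
    #((A ×ˢ A ×ˢ A ×ˢ A).filter fun q => q.1 + q.2.1 = q.2.2.1 + q.2.2.2)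
      = ∑ p ∈ A ×ˢ A, wt A (p.1 - p.2) := by
  have h := card_filter_prod_left (A ×ˢ A) (A ×ˢ A)
      (fun x => x.2.1 - x.2.2 = x.1.1 - x.1.2)
  rw [show (∑ p ∈ A ×ˢ A, wt A (p.1 - p.2)) = ∑ a ∈ A ×ˢ A,
      #((A ×ˢ A).filter fun b => (a, b).2.1 - (a, b).2.2 = (a, b).1.1 - (a, b).1.2) from
    Finset.sum_congr rfl fun p _ => rfl]
  refine Eq.trans ?_ h
  apply card_nbij' (fun q => ((q.1, q.2.2.1), (q.2.2.2, q.2.1)))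
      (fun x => (x.1.1, x.2.2, x.1.2, x.2.1))
  · intro q hq
    simp only [coe_filter, Set.mem_setOf_eq, mem_coe, mem_filter, mem_product] at hq ⊢
    obtain ⟨⟨h1, h2, h3, h4⟩, he⟩ := hq
    refine ⟨⟨⟨h1, h3⟩, h4, h2⟩, ?_⟩
    have : q.1 + q.2.1 = q.2.2.1 + q.2.2.2 := he
    abel_nf
    linear_combination (norm := abel) -this
  · intro x hx
    simp only [coe_filter, Set.mem_setOf_eq, mem_coe, mem_filter, mem_product] at hx ⊢
    obtain ⟨⟨⟨h1, h2⟩, h3, h4⟩, he⟩ := hx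
    exact ⟨⟨h1, h4, h2, h3⟩, by linear_combination (norm := abel) -he⟩
  · intro q _; rfl
  · intro x _; rfl


lemma wt_le (A : Finset G) (d : G) : wt A d ≤ #A := by
  apply card_le_card_of_injOn (fun z => z.1)
  · intro z hz
    simp only [wt, coe_filter, Set.mem_setOf_eq, mem_coe, mem_filter, mem_product] at hz
    exact hz.1.1
  · intro z hz z' hz' h
    simp only [wt, coe_filter, Set.mem_setOf_eq, mem_coe, mem_product] at hz hz'
    have h3 := hz.2.trans hz'.2.symm
    simp only [h] at h3
    exact Prod.ext h (sub_right_injective h3)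

lemma popular_card (A : Finset G) (K : ℝ) (hK : 1 ≤ K) (hA : A.Nonempty)
    (hE : (#A : ℝ) ^ 3 / K ≤
      #((A ×ˢ A ×ˢ A ×ˢ A).filter fun q => q.1 + q.2.1 = q.2.2.1 + q.2.2.2)) :
    (#A : ℝ) ^ 2 / (2 * K) ≤
      #((A ×ˢ A).filter fun p => (#A : ℝ) / (2 * K) ≤ wt A (p.1 - p.2)) := by
  set n : ℝ := (#A : ℝ) with hn
  have hn1 : 1 ≤ n := by rw [hn]; exact_mod_cast hA.card_pos
  have hn0 : 0 < n := by linarith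
  have hK0 : 0 < K := by linarith
  have hsum : (n ^ 3 / K) ≤ ∑ p ∈ A ×ˢ A, (wt A (p.1 - p.2) : ℝ) := by
    calc (n ^ 3 / K) ≤ _ := hE
    _ = ∑ p ∈ A ×ˢ A, (wt A (p.1 - p.2) : ℝ) := by rw [energy_eq]; push_cast; ring
  rw [← Finset.sum_filter_add_sum_filter_not (A ×ˢ A)
    (fun p => (n / (2 * K) ≤ (wt A (p.1 - p.2) : ℝ)))] at hsum
  set P := (A ×ˢ A).filter (fun p => (n / (2 * K) ≤ (wt A (p.1 - p.2) : ℝ))) with hP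
  have h1 : ∑ p ∈ P, (wt A (p.1 - p.2) : ℝ) ≤ #P * n := by
    rw [← nsmul_eq_mul]
    apply Finset.sum_le_card_nsmul
    intro p _
    rw [hn]
    exact_mod_cast wt_le A (p.1 - p.2)
  have h2 : ∑ p ∈ (A ×ˢ A).filter (fun p => ¬ (n / (2 * K) ≤ (wt A (p.1 - p.2) : ℝ))),
      (wt A (p.1 - p.2) : ℝ) ≤ n ^ 2 * (n / (2 * K)) := by
    calc ∑ p ∈ (A ×ˢ A).filter (fun p => ¬ (n / (2 * K) ≤ (wt A (p.1 - p.2) : ℝ))),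
        (wt A (p.1 - p.2) : ℝ)
        ≤ #((A ×ˢ A).filter (fun p => ¬ (n / (2 * K) ≤ (wt A (p.1 - p.2) : ℝ)))) •
          (n / (2 * K)) := by
          apply Finset.sum_le_card_nsmul
          intro p hp
          exact le_of_not_ge (mem_filter.1 hp).2
      _ ≤ n ^ 2 * (n / (2 * K)) := by
          rw [nsmul_eq_mul]
          apply mul_le_mul_of_nonneg_right _ (by positivity)
          calc (#((A ×ˢ A).filter (fun p => ¬ (n / (2 * K) ≤ (wt A (p.1 - p.2) : ℝ)))) : ℝ)
              ≤ #(A ×ˢ A) := by exact_mod_cast card_le_card (filter_subset _ _)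
            _ = n ^ 2 := by rw [card_product]; push_cast; ring
  have key : n ^ 3 / (2 * K) ≤ #P * n := by
    have : n ^ 3 / K - n ^ 2 * (n / (2 * K)) ≤ #P * n := by linarith
    calc n ^ 3 / (2 * K) = n ^ 3 / K - n ^ 2 * (n / (2 * K)) := by field_simp; ring
      _ ≤ #P * n := this
  have := mul_le_mul_of_nonneg_right (le_refl (n ^ 2 / (2 * K))) (le_of_lt hn0)
  apply le_of_mul_le_mul_right _ hn0
  calc n ^ 2 / (2 * K) * n = n ^ 3 / (2 * K) := by ring
    _ ≤ #P * n := key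

omit [AddCommGroup G] in
lemma pass1 (A : Finset G) (Q : Finset (G × G)) (hQ : Q ⊆ A ×ˢ A) (p : ℝ) (hp0 : 0 < p)
    (hcard : p * (#A : ℝ) ^ 2 ≤ #Q) :
    ∃ H ⊆ Q, (p / 2) * (#A : ℝ) ^ 2 ≤ #H ∧
      ∀ e ∈ H, (p / 2) * #A ≤ #(A.filter fun x => (e.1, x) ∈ H) := by
  classical
  set n : ℝ := (#A : ℝ) with hn
  have hn0 : 0 ≤ n := by positivity
  set cond : G → Prop := fun a => (p / 2) * n ≤ (#(A.filter fun x => (a, x) ∈ Q) : ℝ)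
    with hcond
  refine ⟨Q.filter (fun e => cond e.1), filter_subset _ _, ?_, ?_⟩
  · -- size bound
    have hsplit : #(Q.filter fun e => cond e.1) + #(Q.filter fun e => ¬ cond e.1) = #Q :=
      card_filter_add_card_filter_not _
    have hlow : (#(Q.filter fun e => ¬ cond e.1) : ℝ) ≤ n * ((p / 2) * n) := by
      have hQl : Q.filter (fun e => ¬ cond e.1)
          = (A ×ˢ A).filter (fun e => e ∈ Q ∧ ¬ cond e.1) := by
        ext e
        simp only [mem_filter]
        constructor
        · intro ⟨h1, h2⟩; exact ⟨hQ h1, h1, h2⟩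
        · intro ⟨_, h⟩; exact h
      rw [hQl, card_filter_prod_left A A (fun e : G × G => e ∈ Q ∧ ¬ cond e.1)]
      push_cast
      calc ∑ a ∈ A, (#(A.filter fun x => ((a, x) ∈ Q ∧ ¬ cond a)) : ℝ)
          ≤ ∑ _a ∈ A, (p / 2) * n := by
            apply Finset.sum_le_sum
            intro a _
            by_cases h : cond a
            · have : (A.filter fun x => ((a, x) ∈ Q ∧ ¬ cond a)) = ∅ := by
                apply filter_false_of_mem; intro x _ ⟨_, hc⟩; exact hc h
              rw [this]; simp; positivity
            · calc (#(A.filter fun x => ((a, x) ∈ Q ∧ ¬ cond a)) : ℝ)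
                  ≤ (#(A.filter fun x => (a, x) ∈ Q) : ℝ) := by
                    have : (A.filter fun x => ((a, x) ∈ Q ∧ ¬ cond a))
                        ⊆ A.filter fun x => (a, x) ∈ Q := by
                      intro x hx
                      rw [mem_filter] at hx ⊢
                      exact ⟨hx.1, hx.2.1⟩
                    exact_mod_cast card_le_card this
                _ ≤ (p / 2) * n := le_of_not_ge h
        _ = n * ((p / 2) * n) := by rw [Finset.sum_const, nsmul_eq_mul]
    have : (#Q : ℝ) ≤ #(Q.filter fun e => cond e.1) + n * ((p / 2) * n) := by
      rw [← hsplit]; push_cast; linarith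
    calc (p / 2) * n ^ 2 = p * n ^ 2 - n * ((p / 2) * n) := by ring
      _ ≤ (#(Q.filter fun e => cond e.1) : ℝ) := by linarith
  · -- degree bound
    intro e he
    rw [mem_filter] at he
    have hdegeq : (A.filter fun x => (e.1, x) ∈ Q.filter (fun e' => cond e'.1))
        = A.filter fun x => (e.1, x) ∈ Q := by
      apply filter_congr
      intro x _
      simp only [mem_filter]
      constructor
      · intro ⟨h1, _⟩; exact h1
      · intro h1; exact ⟨h1, he.2⟩
    rw [hdegeq]
    exact he.2

omit [AddCommGroup G] in
lemma drc (A : Finset G) (H : Finset (G × G)) (hH : H ⊆ A ×ˢ A) (q : ℝ) (hq0 : 0 < q)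
    (hq1 : q ≤ 1) (hA : A.Nonempty)
    (hcard : q * (#A : ℝ) ^ 2 ≤ #H)
    (hdeg : ∀ e ∈ H, q * (#A : ℝ) ≤ #(A.filter fun x => (e.1, x) ∈ H)) :
    ∃ A' B' : Finset G, A' ⊆ A ∧ B' ⊆ A ∧
      3 / 8 * q * (#A : ℝ) ≤ #A' ∧ 3 / 4 * q * (#A : ℝ) ≤ #B' ∧
      ∀ a ∈ A', ∀ b ∈ B', q ^ 5 / 4096 * (#A : ℝ) ^ 2 ≤
        #((A ×ˢ A).filter fun yx => (a, yx.2) ∈ H ∧ (yx.1, yx.2) ∈ H ∧ (yx.1, b) ∈ H) := by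
  classical
  set n : ℝ := (#A : ℝ) with hn
  have hn1 : 1 ≤ n := by rw [hn]; exact_mod_cast hA.card_pos
  have hn0 : 0 < n := by linarith
  -- degrees
  set deg2 : G → ℕ := fun b => #(A.filter fun x => (x, b) ∈ H) with hdeg2
  have hHrepr : (A ×ˢ A).filter (fun e => e ∈ H) = H := by
    ext e
    simp only [mem_filter, and_iff_right_iff_imp]
    exact fun he => hH he
  have hstep1 : (#H : ℝ) = ∑ b ∈ A, (deg2 b : ℝ) := by
    rw [← hHrepr, card_filter_prod_right A A (fun e => e ∈ H)]
    push_cast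
    rfl
  -- Cauchy-Schwarz
  have hCS : q ^ 2 * n ^ 3 ≤ ∑ b ∈ A, (deg2 b : ℝ) ^ 2 := by
    have h1 : (∑ b ∈ A, (deg2 b : ℝ)) ^ 2 ≤ n * ∑ b ∈ A, (deg2 b : ℝ) ^ 2 :=
      sq_sum_le_card_mul_sum_sq
    have h2 : q * n ^ 2 ≤ ∑ b ∈ A, (deg2 b : ℝ) := by rw [← hstep1]; exact hcard
    have h3 : (q * n ^ 2) ^ 2 ≤ (∑ b ∈ A, (deg2 b : ℝ)) ^ 2 := by
      apply pow_le_pow_left₀ (by positivity) h2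
    nlinarith
  -- bad pairs
  set β : ℝ := q ^ 3 / 256 with hβ
  set badp : G → G → Prop :=
    fun a a' => (#(A.filter fun x => (a, x) ∈ H ∧ (a', x) ∈ H) : ℝ) < β * n with hbadp
  set badpairs : G → ℕ := fun b =>
    #((A ×ˢ A).filter fun pr => badp pr.1 pr.2 ∧ (pr.1, b) ∈ H ∧ (pr.2, b) ∈ H) with hbadpairs
  have hstep3 : ∑ b ∈ A, (badpairs b : ℝ) ≤ β * n ^ 3 := by
    have e1 : ∑ b ∈ A, (badpairs b : ℕ) =
        #(((A ×ˢ A) ×ˢ A).filter fun z =>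
          badp z.1.1 z.1.2 ∧ (z.1.1, z.2) ∈ H ∧ (z.1.2, z.2) ∈ H) := by
      rw [card_filter_prod_right (A ×ˢ A) A
        (fun z : (G × G) × G => badp z.1.1 z.1.2 ∧ (z.1.1, z.2) ∈ H ∧ (z.1.2, z.2) ∈ H)]
    have e2 : #(((A ×ˢ A) ×ˢ A).filter fun z =>
          badp z.1.1 z.1.2 ∧ (z.1.1, z.2) ∈ H ∧ (z.1.2, z.2) ∈ H) =
        ∑ pr ∈ A ×ˢ A, #(A.filter fun b => badp pr.1 pr.2 ∧ (pr.1, b) ∈ H ∧ (pr.2, b) ∈ H) := by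
      rw [card_filter_prod_left (A ×ˢ A) A
        (fun z : (G × G) × G => badp z.1.1 z.1.2 ∧ (z.1.1, z.2) ∈ H ∧ (z.1.2, z.2) ∈ H)]
    calc ∑ b ∈ A, (badpairs b : ℝ)
        = ∑ pr ∈ A ×ˢ A,
          (#(A.filter fun b => badp pr.1 pr.2 ∧ (pr.1, b) ∈ H ∧ (pr.2, b) ∈ H) : ℝ) := by
          rw [← Nat.cast_sum, ← Nat.cast_sum, e1, e2]
      _ ≤ ∑ _pr ∈ A ×ˢ A, β * n := by
          apply Finset.sum_le_sum
          intro pr _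
          by_cases hb : badp pr.1 pr.2
          · calc (#(A.filter fun b => badp pr.1 pr.2 ∧ (pr.1, b) ∈ H ∧ (pr.2, b) ∈ H) : ℝ)
                ≤ (#(A.filter fun x => (pr.1, x) ∈ H ∧ (pr.2, x) ∈ H) : ℝ) := by
                  apply Nat.cast_le.2
                  apply card_le_card
                  intro x hx
                  rw [mem_filter] at hx ⊢
                  exact ⟨hx.1, hx.2.2⟩
              _ ≤ β * n := le_of_lt hb
          · have : (A.filter fun b => badp pr.1 pr.2 ∧ (pr.1, b) ∈ H ∧ (pr.2, b) ∈ H) = ∅ := by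
              apply filter_false_of_mem
              intro x _ hx
              exact hb hx.1
            rw [this]
            simp
            positivity
      _ = n ^ 2 * (β * n) := by
          rw [Finset.sum_const, card_product, nsmul_eq_mul]
          push_cast
          ring
      _ ≤ β * n ^ 3 := by ring_nf; rfl
  -- dependent random choice: find b₀
  have hex : ∃ b₀ ∈ A, q ^ 2 * n ^ 2 / 2 ≤ (deg2 b₀ : ℝ) ^ 2 - (128 / q) * badpairs b₀ := by
    apply Finset.exists_le_of_sum_le hA
    have : ∑ b ∈ A, (q ^ 2 * n ^ 2 / 2) = n * (q ^ 2 * n ^ 2 / 2) := by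
      rw [Finset.sum_const, nsmul_eq_mul]
    rw [this]
    have hsum2 : ∑ b ∈ A, ((deg2 b : ℝ) ^ 2 - (128 / q) * badpairs b)
        = (∑ b ∈ A, (deg2 b : ℝ) ^ 2) - (128 / q) * ∑ b ∈ A, (badpairs b : ℝ) := by
      rw [Finset.sum_sub_distrib, Finset.mul_sum]
    rw [hsum2]
    have h4 : (128 / q) * ∑ b ∈ A, (badpairs b : ℝ) ≤ (128 / q) * (β * n ^ 3) := by
      apply mul_le_mul_of_nonneg_left hstep3 (by positivity)
    have h5 : (128 / q) * (β * n ^ 3) = q ^ 2 * n ^ 3 / 2 := by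
      rw [hβ]; field_simp; ring
    nlinarith
  obtain ⟨b₀, hb₀A, hb₀⟩ := hex
  set m : ℕ := deg2 b₀ with hm
  have hbp0 : (0 : ℝ) ≤ (128 / q) * ((badpairs b₀ : ℝ)) := by positivity
  have hm2 : q ^ 2 * n ^ 2 / 2 ≤ (m : ℝ) ^ 2 := by linarith
  have hmlow : q * n / 2 ≤ (m : ℝ) := by
    have hmnn : (0 : ℝ) ≤ (m : ℝ) := Nat.cast_nonneg m
    nlinarith [hm2, hq0, hn0, hmnn]
  have hm0 : (0 : ℝ) < m := by nlinarith [hq0, hn0]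
  have hbp : (badpairs b₀ : ℝ) ≤ (m : ℝ) ^ 2 * (q / 128) := by
    have hnn : (0:ℝ) ≤ q ^ 2 * n ^ 2 / 2 := by positivity
    have : (128 / q) * ((badpairs b₀ : ℝ)) ≤ (m : ℝ) ^ 2 := by linarith
    calc (badpairs b₀ : ℝ) = ((128 / q) * badpairs b₀) * (q / 128) := by field_simp
      _ ≤ (m : ℝ) ^ 2 * (q / 128) := by
          apply mul_le_mul_of_nonneg_right this (by positivity)
  -- the neighbourhood of b₀ and the cleaned set A'
  set A₂ : Finset G := A.filter (fun x => (x, b₀) ∈ H) with hA₂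
  have hA₂card : #A₂ = m := rfl
  have hA₂A : A₂ ⊆ A := filter_subset _ _
  set bd : G → ℕ := fun a => #(A₂.filter fun a' => badp a a') with hbd
  set A' : Finset G := A₂.filter (fun a => (bd a : ℝ) ≤ q / 32 * m) with hA'
  have hA'A₂ : A' ⊆ A₂ := filter_subset _ _
  have hA'A : A' ⊆ A := hA'A₂.trans hA₂A
  -- Markov: few vertices have many bad partners
  have hbdsum : ∑ a ∈ A₂, (bd a : ℝ) ≤ (badpairs b₀ : ℝ) := by
    have e1 : ∑ a ∈ A₂, (bd a : ℕ) = #((A₂ ×ˢ A₂).filter fun pr => badp pr.1 pr.2) := by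
      rw [card_filter_prod_left A₂ A₂ (fun pr : G × G => badp pr.1 pr.2)]
    have e2 : #((A₂ ×ˢ A₂).filter fun pr => badp pr.1 pr.2) ≤ badpairs b₀ := by
      apply card_le_card
      intro pr hpr
      rw [mem_filter, mem_product] at hpr
      rw [mem_filter, mem_product]
      have h1 := (mem_filter.1 hpr.1.1)
      have h2 := (mem_filter.1 hpr.1.2)
      exact ⟨⟨h1.1, h2.1⟩, hpr.2, h1.2, h2.2⟩
    calc ∑ a ∈ A₂, (bd a : ℝ) = ((∑ a ∈ A₂, (bd a : ℕ) : ℕ) : ℝ) := by push_cast; rfl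
      _ ≤ (badpairs b₀ : ℝ) := by rw [e1]; exact_mod_cast e2
  have hA'card : 3 / 4 * (m : ℝ) ≤ #A' := by
    have hsd : #(A₂ \ A') = #A₂ - #A' := card_sdiff_of_subset hA'A₂
    have hsd2 : (#(A₂ \ A') : ℝ) * (q / 32 * m) ≤ (m : ℝ) ^ 2 * (q / 128) := by
      calc (#(A₂ \ A') : ℝ) * (q / 32 * m) = ∑ _a ∈ A₂ \ A', (q / 32 * (m:ℝ)) := by
            rw [Finset.sum_const, nsmul_eq_mul]
        _ ≤ ∑ a ∈ A₂ \ A', (bd a : ℝ) := by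
            apply Finset.sum_le_sum
            intro a ha
            rw [mem_sdiff] at ha
            have := ha.2
            rw [hA', mem_filter] at this
            push_neg at this
            exact le_of_lt (this ha.1)
        _ ≤ ∑ a ∈ A₂, (bd a : ℝ) := by
            apply Finset.sum_le_sum_of_subset_of_nonneg (sdiff_subset)
            intro a _ _
            positivity
        _ ≤ (badpairs b₀ : ℝ) := hbdsum
        _ ≤ (m : ℝ) ^ 2 * (q / 128) := hbp
    have hsd3 : (#(A₂ \ A') : ℝ) ≤ (m : ℝ) / 4 := by
      have hpos : (0 : ℝ) < q / 32 * m := by positivity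
      apply le_of_mul_le_mul_right _ hpos
      calc (#(A₂ \ A') : ℝ) * (q / 32 * m) ≤ (m : ℝ) ^ 2 * (q / 128) := hsd2
        _ = (m : ℝ) / 4 * (q / 32 * m) := by ring
    have hcards : (#A' : ℝ) = (m : ℝ) - #(A₂ \ A') := by
      rw [hsd]
      have hle : #A' ≤ #A₂ := card_le_card hA'A₂
      push_cast [hA₂card ▸ Nat.cast_sub (hA₂card ▸ hle)]
      rw [← hA₂card]
      push_cast [Nat.cast_sub hle]
      ring
    linarith
  have hA'pos : (0 : ℝ) < #A' := by nlinarith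
  -- every element of A' has full degree
  have hdegA' : ∀ y ∈ A', q * n ≤ #(A.filter fun x => (y, x) ∈ H) := by
    intro y hy
    have hy2 := mem_filter.1 (hA'A₂ hy)
    exact hdeg (y, b₀) hy2.2
  -- the set B'
  set nb : G → ℕ := fun b => #(A.filter fun y => (y, b) ∈ H ∧ y ∈ A') with hnb
  set B' : Finset G := A.filter (fun b => q / 4 * (#A' : ℝ) ≤ nb b) with hB'
  have hB'A : B' ⊆ A := filter_subset _ _
  -- counting edges into A'
  have hnbsum : (#A' : ℝ) * (q * n) ≤ ∑ b ∈ A, (nb b : ℝ) := by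
    have e1 : ∑ b ∈ A, (nb b : ℕ) =
        #((A ×ˢ A).filter fun e => (e.1, e.2) ∈ H ∧ e.1 ∈ A') := by
      rw [card_filter_prod_right A A (fun e : G × G => (e.1, e.2) ∈ H ∧ e.1 ∈ A')]
    have e2 : #((A ×ˢ A).filter fun e => (e.1, e.2) ∈ H ∧ e.1 ∈ A') =
        ∑ y ∈ A, #(A.filter fun x => (y, x) ∈ H ∧ y ∈ A') := by
      rw [card_filter_prod_left A A (fun e : G × G => (e.1, e.2) ∈ H ∧ e.1 ∈ A')]
    have e3 : ∀ y ∈ A', (A.filter fun x => ((y, x) ∈ H ∧ y ∈ A'))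
        = A.filter fun x => (y, x) ∈ H := by
      intro y hy
      apply filter_congr
      intro x _
      simp only [and_iff_left_iff_imp]
      exact fun _ => hy
    calc (#A' : ℝ) * (q * n) = ∑ _y ∈ A', q * n := by rw [Finset.sum_const, nsmul_eq_mul]
      _ ≤ ∑ y ∈ A', (#(A.filter fun x => ((y, x) ∈ H ∧ y ∈ A')) : ℝ) := by
          apply Finset.sum_le_sum
          intro y hy
          rw [e3 y hy]
          exact hdegA' y hy
      _ ≤ ∑ y ∈ A, (#(A.filter fun x => ((y, x) ∈ H ∧ y ∈ A')) : ℝ) := by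
          apply Finset.sum_le_sum_of_subset_of_nonneg hA'A
          intro y _ _
          positivity
      _ = ∑ b ∈ A, (nb b : ℝ) := by
          rw [← Nat.cast_sum, ← Nat.cast_sum, e1, e2]
  have hB'card : 3 / 4 * q * n ≤ #B' := by
    have hsplit := Finset.sum_filter_add_sum_filter_not A
      (fun b => q / 4 * (#A' : ℝ) ≤ nb b) (fun b => (nb b : ℝ))
    have h1 : ∑ b ∈ A.filter (fun b => ¬ (q / 4 * (#A' : ℝ) ≤ nb b)), (nb b : ℝ)
        ≤ n * (q / 4 * (#A' : ℝ)) := by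
      calc ∑ b ∈ A.filter (fun b => ¬ (q / 4 * (#A' : ℝ) ≤ nb b)), (nb b : ℝ)
          ≤ ∑ _b ∈ A.filter (fun b => ¬ (q / 4 * (#A' : ℝ) ≤ nb b)), (q / 4 * (#A' : ℝ)) := by
            apply Finset.sum_le_sum
            intro b hb
            exact le_of_not_ge (mem_filter.1 hb).2
        _ = (#(A.filter (fun b => ¬ (q / 4 * (#A' : ℝ) ≤ nb b))) : ℝ) * (q / 4 * (#A' : ℝ)) := by
            rw [Finset.sum_const, nsmul_eq_mul]
        _ ≤ n * (q / 4 * (#A' : ℝ)) := by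
            apply mul_le_mul_of_nonneg_right _ (by positivity)
            rw [hn]
            exact_mod_cast card_le_card (filter_subset _ _)
    have h2 : ∑ b ∈ B', (nb b : ℝ) ≤ (#B' : ℝ) * (#A' : ℝ) := by
      calc ∑ b ∈ B', (nb b : ℝ) ≤ ∑ _b ∈ B', (#A' : ℝ) := by
            apply Finset.sum_le_sum
            intro b _
            have : (A.filter fun y => (y, b) ∈ H ∧ y ∈ A') ⊆ A' := by
              intro y hy
              exact (mem_filter.1 hy).2.2
            exact_mod_cast card_le_card this
        _ = (#B' : ℝ) * (#A' : ℝ) := by rw [Finset.sum_const, nsmul_eq_mul]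
    have hkey : 3 / 4 * q * n * (#A' : ℝ) ≤ (#B' : ℝ) * (#A' : ℝ) := by
      have : ∑ b ∈ B', (nb b : ℝ) = ∑ b ∈ A.filter (fun b => q / 4 * (#A' : ℝ) ≤ nb b),
          (nb b : ℝ) := rfl
      nlinarith [hnbsum, h1, h2, hsplit]
    exact le_of_mul_le_mul_right hkey hA'pos
  -- conclusion: many paths of length three
  refine ⟨A', B', hA'A, hB'A, ?_, ?_, ?_⟩
  · calc 3 / 8 * q * n ≤ 3 / 4 * (q * n / 2) := le_of_eq (by ring)
      _ ≤ 3 / 4 * (m : ℝ) := by linarith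
      _ ≤ #A' := hA'card
  · exact hB'card
  · intro a ha b hb
    -- the set of good middle vertices y
    set nbset : Finset G := A.filter (fun y => (y, b) ∈ H ∧ y ∈ A') with hnbset
    set Y : Finset G := nbset.filter (fun y => ¬ badp a y) with hY
    have hYcard : q ^ 2 * n / 16 ≤ (#Y : ℝ) := by
      have hsplit := card_filter_add_card_filter_not (s := nbset) (p := fun y => badp a y)
      have hbad : #(nbset.filter (fun y => badp a y)) ≤ bd a := by
        apply card_le_card
        intro y hy
        rw [mem_filter] at hy ⊢
        exact ⟨mem_filter.1 (hA'A₂ (mem_filter.1 hy.1).2.2) |>.1 |> (fun _ => hA'A₂ (mem_filter.1 hy.1).2.2), hy.2⟩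
      have hbda : (bd a : ℝ) ≤ q / 32 * m := (mem_filter.1 ha).2
      have hnbb : q / 4 * (#A' : ℝ) ≤ nb b := (mem_filter.1 hb).2
      have hnbeq : nb b = #nbset := rfl
      have hc : (#nbset : ℝ) = #(nbset.filter (fun y => badp a y))
          + #(nbset.filter (fun y => ¬ badp a y)) := by exact_mod_cast hsplit.symm
      have : (#Y : ℝ) ≥ q / 4 * (#A' : ℝ) - q / 32 * m := by
        rw [hY]
        have hbadr : (#(nbset.filter (fun y => badp a y)) : ℝ) ≤ q / 32 * m := by
          calc (#(nbset.filter (fun y => badp a y)) : ℝ) ≤ (bd a : ℝ) := by exact_mod_cast hbad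
            _ ≤ q / 32 * m := hbda
        have hnbr : q / 4 * (#A' : ℝ) ≤ (#nbset : ℝ) := by
          rw [← hnbeq]; exact hnbb
        linarith
      calc q ^ 2 * n / 16 ≤ q / 4 * (3 / 4 * (m : ℝ)) - q / 32 * m := by nlinarith
        _ ≤ q / 4 * (#A' : ℝ) - q / 32 * m := by nlinarith
        _ ≤ #Y := this
    -- each good y gives many paths
    have hpaths : ∑ y ∈ Y, (#(A.filter fun x => (a, x) ∈ H ∧ (y, x) ∈ H) : ℝ)
        ≤ #((A ×ˢ A).filter fun yx => (a, yx.2) ∈ H ∧ (yx.1, yx.2) ∈ H ∧ (yx.1, b) ∈ H) := by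
      have e1 : ∑ y ∈ Y, (#(A.filter fun x => (a, x) ∈ H ∧ (y, x) ∈ H) : ℕ) =
          #((Y ×ˢ A).filter fun yx => (a, yx.2) ∈ H ∧ (yx.1, yx.2) ∈ H) := by
        rw [card_filter_prod_left Y A (fun yx : G × G => (a, yx.2) ∈ H ∧ (yx.1, yx.2) ∈ H)]
      have e2 : ((Y ×ˢ A).filter fun yx => (a, yx.2) ∈ H ∧ (yx.1, yx.2) ∈ H)
          ⊆ (A ×ˢ A).filter fun yx => (a, yx.2) ∈ H ∧ (yx.1, yx.2) ∈ H ∧ (yx.1, b) ∈ H := by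
        intro yx hyx
        rw [mem_filter, mem_product] at hyx ⊢
        have hy1 : yx.1 ∈ Y := hyx.1.1
        have hy1' := mem_filter.1 (mem_filter.1 hy1).1
        exact ⟨⟨hy1'.1, hyx.1.2⟩, hyx.2.1, hyx.2.2, hy1'.2.1⟩
      calc ∑ y ∈ Y, (#(A.filter fun x => (a, x) ∈ H ∧ (y, x) ∈ H) : ℝ)
          = ((#((Y ×ˢ A).filter fun yx => (a, yx.2) ∈ H ∧ (yx.1, yx.2) ∈ H) : ℕ) : ℝ) := by
            rw [← e1]; push_cast; rfl
        _ ≤ _ := by exact_mod_cast card_le_card e2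
    have hgood : ∀ y ∈ Y, β * n ≤ (#(A.filter fun x => (a, x) ∈ H ∧ (y, x) ∈ H) : ℝ) := by
      intro y hy
      have := (mem_filter.1 hy).2
      rw [hbadp] at this
      exact not_lt.1 this
    calc q ^ 5 / 4096 * n ^ 2 = (q ^ 2 * n / 16) * (β * n) := by rw [hβ]; ring
      _ ≤ (#Y : ℝ) * (β * n) := by
          apply mul_le_mul_of_nonneg_right hYcard (by positivity)
      _ ≤ ∑ y ∈ Y, (#(A.filter fun x => (a, x) ∈ H ∧ (y, x) ∈ H) : ℝ) := by
          rw [← nsmul_eq_mul]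
          exact Finset.card_nsmul_le_sum Y _ _ hgood
      _ ≤ _ := hpaths

lemma count_sub (A : Finset G) (H : Finset (G × G)) (K L : ℝ) (hK : 0 < K) (hL : 0 ≤ L)
    (hpop : ∀ e ∈ H, (#A : ℝ) / (2 * K) ≤ wt A (e.1 - e.2))
    (A' B' : Finset G) (hA'A : A' ⊆ A) (hB'A : B' ⊆ A)
    (hpaths : ∀ a ∈ A', ∀ b ∈ B', L ≤
      #((A ×ˢ A).filter fun yx => (a, yx.2) ∈ H ∧ (yx.1, yx.2) ∈ H ∧ (yx.1, b) ∈ H)) :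
    (#(A' - B') : ℝ) * (L * ((#A : ℝ) / (2 * K)) ^ 3) ≤ (#A : ℝ) ^ 6 := by
  classical
  set n : ℝ := (#A : ℝ) with hn
  set T : G → Finset ((G × G) × (G × G) × (G × G)) := fun v =>
    ((A ×ˢ A) ×ˢ (A ×ˢ A) ×ˢ (A ×ˢ A)).filter fun t =>
      (t.1.1 - t.1.2) - (t.2.1.1 - t.2.1.2) + (t.2.2.1 - t.2.2.2) = v with hT
  have claim1 : ∀ v ∈ A' - B', L * (n / (2 * K)) ^ 3 ≤ (#(T v) : ℝ) := by
    intro v hv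
    obtain ⟨a, ha, b, hb, rfl⟩ := Finset.mem_sub.1 hv
    set P : G × G → Prop := fun yx => (a, yx.2) ∈ H ∧ (yx.1, yx.2) ∈ H ∧ (yx.1, b) ∈ H with hP
    set U : Finset ((G × G) × (G × G) × (G × G) × (G × G)) :=
      ((A ×ˢ A) ×ˢ (A ×ˢ A) ×ˢ (A ×ˢ A) ×ˢ (A ×ˢ A)).filter fun w =>
        P w.1 ∧ w.2.1.1 - w.2.1.2 = a - w.1.2 ∧ w.2.2.1.1 - w.2.2.1.2 = w.1.1 - w.1.2 ∧
          w.2.2.2.1 - w.2.2.2.2 = w.1.1 - b with hU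
    have hUcount : L * (n / (2 * K)) ^ 3 ≤ (#U : ℝ) := by
      have e1 : #U = ∑ yx ∈ A ×ˢ A, #(((A ×ˢ A) ×ˢ (A ×ˢ A) ×ˢ (A ×ˢ A)).filter fun t =>
          P yx ∧ t.1.1 - t.1.2 = a - yx.2 ∧ t.2.1.1 - t.2.1.2 = yx.1 - yx.2 ∧
            t.2.2.1 - t.2.2.2 = yx.1 - b) := by
        rw [hU, card_filter_prod_left (A ×ˢ A) ((A ×ˢ A) ×ˢ (A ×ˢ A) ×ˢ (A ×ˢ A))
          (fun w : (G × G) × (G × G) × (G × G) × (G × G) =>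
            P w.1 ∧ w.2.1.1 - w.2.1.2 = a - w.1.2 ∧ w.2.2.1.1 - w.2.2.1.2 = w.1.1 - w.1.2 ∧
              w.2.2.2.1 - w.2.2.2.2 = w.1.1 - b)]
      have e2 : ∀ yx ∈ (A ×ˢ A).filter P,
          #(((A ×ˢ A) ×ˢ (A ×ˢ A) ×ˢ (A ×ˢ A)).filter fun t =>
            P yx ∧ t.1.1 - t.1.2 = a - yx.2 ∧ t.2.1.1 - t.2.1.2 = yx.1 - yx.2 ∧
              t.2.2.1 - t.2.2.2 = yx.1 - b)
          = wt A (a - yx.2) * (wt A (yx.1 - yx.2) * wt A (yx.1 - b)) := by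
        intro yx hyx
        have hPyx : P yx := (mem_filter.1 hyx).2
        rw [show (((A ×ˢ A) ×ˢ (A ×ˢ A) ×ˢ (A ×ˢ A)).filter fun t =>
            P yx ∧ t.1.1 - t.1.2 = a - yx.2 ∧ t.2.1.1 - t.2.1.2 = yx.1 - yx.2 ∧
              t.2.2.1 - t.2.2.2 = yx.1 - b)
          = ((A ×ˢ A).filter fun z => z.1 - z.2 = a - yx.2) ×ˢ
            (((A ×ˢ A).filter fun z => z.1 - z.2 = yx.1 - yx.2) ×ˢ
              ((A ×ˢ A).filter fun z => z.1 - z.2 = yx.1 - b)) from ?_]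
        · rw [card_product, card_product]
          rfl
        · ext t
          simp only [mem_filter, mem_product]
          constructor
          · rintro ⟨⟨h1, h2, h3⟩, _, e₁, e₂, e₃⟩
            exact ⟨⟨h1, e₁⟩, ⟨h2, e₂⟩, ⟨h3, e₃⟩⟩
          · rintro ⟨⟨h1, e₁⟩, ⟨h2, e₂⟩, ⟨h3, e₃⟩⟩
            exact ⟨⟨h1, h2, h3⟩, hPyx, e₁, e₂, e₃⟩
      have e3 : ∀ yx ∈ (A ×ˢ A).filter P,
          (n / (2 * K)) ^ 3 ≤
            ((wt A (a - yx.2) * (wt A (yx.1 - yx.2) * wt A (yx.1 - b)) : ℕ) : ℝ) := by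
        intro yx hyx
        have hPyx : P yx := (mem_filter.1 hyx).2
        have w1 := hpop (a, yx.2) hPyx.1
        have w2 := hpop (yx.1, yx.2) hPyx.2.1
        have w3 := hpop (yx.1, b) hPyx.2.2
        have hnk : (0 : ℝ) ≤ n / (2 * K) := by positivity
        push_cast
        calc (n / (2 * K)) ^ 3 = (n / (2 * K)) * ((n / (2 * K)) * (n / (2 * K))) := by ring
          _ ≤ (wt A (a - yx.2) : ℝ) * ((wt A (yx.1 - yx.2) : ℝ) * (wt A (yx.1 - b) : ℝ)) := by
            apply mul_le_mul w1 _ (by positivity) (by positivity)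
            apply mul_le_mul w2 w3 hnk (by positivity)
      calc L * (n / (2 * K)) ^ 3
          ≤ (#((A ×ˢ A).filter P) : ℝ) * (n / (2 * K)) ^ 3 := by
            apply mul_le_mul_of_nonneg_right (hpaths a ha b hb) (by positivity)
        _ = ∑ _yx ∈ (A ×ˢ A).filter P, (n / (2 * K)) ^ 3 := by
            rw [Finset.sum_const, nsmul_eq_mul]
        _ ≤ ∑ yx ∈ (A ×ˢ A).filter P,
            ((wt A (a - yx.2) * (wt A (yx.1 - yx.2) * wt A (yx.1 - b)) : ℕ) : ℝ) :=
            Finset.sum_le_sum e3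
        _ = ((∑ yx ∈ (A ×ˢ A).filter P,
            wt A (a - yx.2) * (wt A (yx.1 - yx.2) * wt A (yx.1 - b)) : ℕ) : ℝ) := by
            push_cast; rfl
        _ ≤ (#U : ℝ) := by
            rw [e1]
            have : ∑ yx ∈ (A ×ˢ A).filter P,
                wt A (a - yx.2) * (wt A (yx.1 - yx.2) * wt A (yx.1 - b))
                = ∑ yx ∈ (A ×ˢ A).filter P,
                  #(((A ×ˢ A) ×ˢ (A ×ˢ A) ×ˢ (A ×ˢ A)).filter fun t =>
                    P yx ∧ t.1.1 - t.1.2 = a - yx.2 ∧ t.2.1.1 - t.2.1.2 = yx.1 - yx.2 ∧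
                      t.2.2.1 - t.2.2.2 = yx.1 - b) :=
              Finset.sum_congr rfl fun yx hyx => (e2 yx hyx).symm
            rw [this]
            apply Nat.cast_le.2
            exact Finset.sum_le_sum_of_subset (filter_subset _ _)
    have hUT : #U ≤ #(T (a - b)) := by
      apply card_le_card_of_injOn (fun w => w.2)
      · intro w hw
        rw [hU, mem_coe, mem_filter, mem_product] at hw
        rw [hT, mem_coe, mem_filter]
        obtain ⟨⟨_, hw2⟩, _, e₁, e₂, e₃⟩ := hw
        refine ⟨hw2, ?_⟩
        rw [e₁, e₂, e₃]
        abel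
      · intro w hw w' hw' hww
        simp only [hU, coe_filter, Set.mem_setOf_eq, mem_coe, mem_product] at hw hw'
        obtain ⟨_, _, e₁, e₂, _⟩ := hw
        obtain ⟨_, _, e₁', e₂', _⟩ := hw'
        have hww' : w.2 = w'.2 := hww
        rw [← hww'] at e₁' e₂'
        have h2 : w.1.2 = w'.1.2 := by
          have := e₁.symm.trans e₁'
          exact sub_right_injective this
        have h1 : w.1.1 = w'.1.1 := by
          have := e₂.symm.trans e₂'
          rw [h2] at this
          exact sub_left_injective this
        exact Prod.ext (Prod.ext h1 h2) hww'
    calc L * (n / (2 * K)) ^ 3 ≤ (#U : ℝ) := hUcount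
      _ ≤ (#(T (a - b)) : ℝ) := by exact_mod_cast hUT
  have claim2 : ∑ v ∈ A' - B', (#(T v) : ℝ) ≤ n ^ 6 := by
    have hdisj : ∀ v1 ∈ A' - B', ∀ v2 ∈ A' - B', v1 ≠ v2 → Disjoint (T v1) (T v2) := by
      intro v1 _ v2 _ hne
      rw [Finset.disjoint_left]
      intro t ht1 ht2
      rw [hT, mem_filter] at ht1 ht2
      exact hne (ht1.2.symm.trans ht2.2)
    have e1 : ∑ v ∈ A' - B', #(T v) = #((A' - B').biUnion T) := (card_biUnion hdisj).symm
    have e2 : ((A' - B').biUnion T) ⊆ (A ×ˢ A) ×ˢ (A ×ˢ A) ×ˢ (A ×ˢ A) := by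
      intro t ht
      obtain ⟨v, _, htv⟩ := Finset.mem_biUnion.1 ht
      exact filter_subset _ _ htv
    calc ∑ v ∈ A' - B', (#(T v) : ℝ) = ((∑ v ∈ A' - B', #(T v) : ℕ) : ℝ) := by push_cast; rfl
      _ ≤ ((#((A ×ˢ A) ×ˢ (A ×ˢ A) ×ˢ (A ×ˢ A)) : ℕ) : ℝ) := by
          exact_mod_cast (e1 ▸ card_le_card e2)
      _ = n ^ 6 := by
          simp only [card_product]
          push_cast
          ring
  calc (#(A' - B') : ℝ) * (L * (n / (2 * K)) ^ 3)
      = ∑ _v ∈ A' - B', (L * (n / (2 * K)) ^ 3) := by rw [Finset.sum_const, nsmul_eq_mul]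
    _ ≤ ∑ v ∈ A' - B', (#(T v) : ℝ) := Finset.sum_le_sum claim1
    _ ≤ n ^ 6 := claim2
end BSGaux

open BSGaux

/-- **Balog–Szemerédi–Gowers theorem.**  If a finite set `A` in an abelian
group has additive energy at least `|A|³/C`, then it contains a subset `A'`
with `|A'| ≥ c(C)|A|` and `|A' + A'| ≤ D(C)|A|`, where `c(C) > 0` and `D(C)`
depend only on `C`. -/
theorem BSG_theorem (C : ℝ) (hC : 0 < C) :
    ∃ c D : ℝ, 0 < c ∧
      ∀ (G : Type) [AddCommGroup G] [DecidableEq G] (A : Finset G), A.Nonempty →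
        (A.card : ℝ) ^ 3 / C ≤
          (((A ×ˢ A ×ˢ A ×ˢ A).filter fun q =>
            q.1 + q.2.1 = q.2.2.1 + q.2.2.2).card : ℝ) →
        ∃ A' ⊆ A, c * A.card ≤ (A'.card : ℝ) ∧ ((A' + A').card : ℝ) ≤ D * A.card := by
  set K : ℝ := max C 1 with hKdef
  have hK1 : 1 ≤ K := le_max_right C 1
  have hK0 : (0 : ℝ) < K := lt_of_lt_of_le one_pos hK1
  have hKC : C ≤ K := le_max_left C 1
  refine ⟨3 / (32 * K), 2 ^ 113 * K ^ 35, by positivity, ?_⟩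
  intro G _ _ A hA hE
  set n : ℝ := (#A : ℝ) with hn
  have hn1 : 1 ≤ n := by rw [hn]; exact_mod_cast hA.card_pos
  have hn0 : 0 < n := by linarith
  -- pass to the popular-difference graph
  have hE' : n ^ 3 / K ≤
      (((A ×ˢ A ×ˢ A ×ˢ A).filter fun q => q.1 + q.2.1 = q.2.2.1 + q.2.2.2).card : ℝ) := by
    calc n ^ 3 / K ≤ n ^ 3 / C := by
          apply div_le_div_of_nonneg_left (by positivity) hC hKC
      _ ≤ _ := hE
  have hPcard := popular_card A K hK1 hA hE'
  set P : Finset (G × G) :=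
    (A ×ˢ A).filter fun p => (#A : ℝ) / (2 * K) ≤ wt A (p.1 - p.2) with hPdef
  have hPsub : P ⊆ A ×ˢ A := filter_subset _ _
  have hPcard' : (1 / (2 * K)) * (#A : ℝ) ^ 2 ≤ #P := by
    calc (1 / (2 * K)) * (#A : ℝ) ^ 2 = (#A : ℝ) ^ 2 / (2 * K) := by
          rw [div_mul_eq_mul_div, one_mul]
      _ ≤ (#P : ℝ) := hPcard
  obtain ⟨H, hHP, hHcard, hHdeg⟩ := pass1 A P hPsub (1 / (2 * K)) (by positivity) hPcard'
  -- dependent random choice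
  obtain ⟨A', B', hA'A, hB'A, hA'card, hB'card, hpaths⟩ :=
    drc A H (hHP.trans hPsub) (1 / (2 * K) / 2) (by positivity)
      (by rw [div_le_one (by norm_num : (0:ℝ) < 2)]; rw [div_le_iff₀ (by positivity)]; nlinarith)
      hA hHcard hHdeg
  set q : ℝ := 1 / (2 * K) / 2 with hqdef
  have hq : q = 1 / (4 * K) := by rw [hqdef]; ring
  -- counting six-tuples
  have hpop : ∀ e ∈ H, (#A : ℝ) / (2 * K) ≤ wt A (e.1 - e.2) := by
    intro e he
    exact (mem_filter.1 (hHP he)).2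
  have hcount := count_sub A H K (q ^ 5 / 4096 * (#A : ℝ) ^ 2) hK0 (by positivity)
    hpop A' B' hA'A hB'A hpaths
  -- bound |A' - B'|
  have hs0 : (0 : ℝ) ≤ (#(A' - B') : ℝ) := by positivity
  have hsb : (#(A' - B') : ℝ) ≤ 2 ^ 25 * K ^ 8 * n := by
    have hpos : (0 : ℝ) < n ^ 5 / (2 ^ 25 * K ^ 8) := by positivity
    apply le_of_mul_le_mul_right _ hpos
    have e1 : n ^ 5 / (2 ^ 25 * K ^ 8) = (q ^ 5 / 4096 * (#A : ℝ) ^ 2) * ((#A : ℝ) / (2 * K)) ^ 3 := by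
      rw [hq, ← hn]
      field_simp
      ring
    calc (#(A' - B') : ℝ) * (n ^ 5 / (2 ^ 25 * K ^ 8))
        = (#(A' - B') : ℝ) * ((q ^ 5 / 4096 * (#A : ℝ) ^ 2) * ((#A : ℝ) / (2 * K)) ^ 3) := by
          rw [e1]
      _ ≤ (#A : ℝ) ^ 6 := hcount
      _ = (2 ^ 25 * K ^ 8 * n) * (n ^ 5 / (2 ^ 25 * K ^ 8)) := by
          rw [← hn]; field_simp
  -- Ruzsa triangle inequality: |A' - A'| is small
  have hRu := Finset.ruzsa_triangle_inequality_sub_sub_sub A' B' A'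
  have hRu' : (#(A' - A') : ℝ) * (#B' : ℝ) ≤ (#(A' - B') : ℝ) * (#(A' - B') : ℝ) := by
    exact_mod_cast hRu
  have hd0 : (0 : ℝ) ≤ (#(A' - A') : ℝ) := by positivity
  have hdb : (#(A' - A') : ℝ) ≤ 2 ^ 54 * K ^ 17 * n := by
    have hpos : (0 : ℝ) < 3 / 4 * q * n := by rw [hqdef]; positivity
    apply le_of_mul_le_mul_right _ hpos
    calc (#(A' - A') : ℝ) * (3 / 4 * q * n)
        ≤ (#(A' - A') : ℝ) * (#B' : ℝ) := by
          apply mul_le_mul_of_nonneg_left _ hd0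
          exact hB'card
      _ ≤ (#(A' - B') : ℝ) * (#(A' - B') : ℝ) := hRu'
      _ ≤ (2 ^ 25 * K ^ 8 * n) * (2 ^ 25 * K ^ 8 * n) := by
          apply mul_le_mul hsb hsb hs0 (by positivity)
      _ ≤ (2 ^ 54 * K ^ 17 * n) * (3 / 4 * q * n) := by
          rw [hq]
          have h1 : (2:ℝ) ^ 54 * K ^ 17 * n * (3 / 4 * (1 / (4 * K)) * n)
              = 3 * 2 ^ 50 * K ^ 16 * n ^ 2 := by field_simp; ring
          have h2 : ((2:ℝ) ^ 25 * K ^ 8 * n) * (2 ^ 25 * K ^ 8 * n)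
              = 2 ^ 50 * K ^ 16 * n ^ 2 := by ring
          rw [h1, h2]
          nlinarith [mul_nonneg (pow_nonneg hK0.le 16) (sq_nonneg n)]
  -- Plünnecke–Ruzsa: |A' + A'| is small
  have hA'pos : (0 : ℝ) < (#A' : ℝ) := by
    have : (0:ℝ) < 3 / 8 * q * n := by rw [hqdef]; positivity
    linarith
  have hA'ne : A'.Nonempty := by
    rw [← Finset.card_pos]
    exact_mod_cast hA'pos
  have hPl := Finset.pluennecke_ruzsa_inequality_nsmul_sub_nsmul_sub hA'ne A' 2 0
  have hset : (2 • A' - 0 • A') = A' + A' := by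
    rw [zero_nsmul, two_nsmul]
    simp
  rw [hset] at hPl
  have hPl' : (#(A' + A') : ℝ) ≤ ((#(A' - A') : ℝ) / (#A' : ℝ)) ^ (2 + 0) * (#A' : ℝ) := by
    have hcast := (NNRat.cast_le (K := ℝ)).2 hPl
    push_cast at hcast
    exact hcast
  have hPl2 : (#(A' + A') : ℝ) * (#A' : ℝ) ≤ (#(A' - A') : ℝ) ^ 2 := by
    have heq : ((#(A' - A') : ℝ) / (#A' : ℝ)) ^ (2 + 0) * (#A' : ℝ)
        = (#(A' - A') : ℝ) ^ 2 / (#A' : ℝ) := by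
      have hne : (#A' : ℝ) ≠ 0 := hA'pos.ne'
      rw [add_zero, div_pow, div_mul_eq_mul_div, sq (#A' : ℝ), mul_div_mul_right _ _ hne]
    rw [heq] at hPl'
    exact (le_div_iff₀ hA'pos).1 hPl'
  -- final assembly
  refine ⟨A', hA'A, ?_, ?_⟩
  · have : 3 / (32 * K) * n = 3 / 8 * q * n := by rw [hq]; field_simp; ring
    rw [this]
    exact hA'card
  · have ht0 : (0 : ℝ) ≤ (#(A' + A') : ℝ) := by positivity
    have hpos : (0 : ℝ) < 3 / 8 * q * n := by rw [hqdef]; positivity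
    apply le_of_mul_le_mul_right _ hpos
    calc (#(A' + A') : ℝ) * (3 / 8 * q * n)
        ≤ (#(A' + A') : ℝ) * (#A' : ℝ) := by
          apply mul_le_mul_of_nonneg_left hA'card ht0
      _ ≤ (#(A' - A') : ℝ) ^ 2 := hPl2
      _ ≤ (2 ^ 54 * K ^ 17 * n) ^ 2 := by
          apply pow_le_pow_left₀ hd0 hdb
      _ ≤ (2 ^ 113 * K ^ 35 * n) * (3 / 8 * q * n) := by
          rw [hq]
          have h1 : ((2:ℝ) ^ 113 * K ^ 35 * n) * (3 / 8 * (1 / (4 * K)) * n)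
              = 3 * 2 ^ 108 * K ^ 34 * n ^ 2 := by field_simp; ring
          have h2 : ((2:ℝ) ^ 54 * K ^ 17 * n) ^ 2 = 2 ^ 108 * K ^ 34 * n ^ 2 := by ring
          rw [h1, h2]
          nlinarith [mul_nonneg (pow_nonneg hK0.le 34) (sq_nonneg n)]
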